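/- Let k be a field, let A_1' ∈ M_{m_1,n_1}(ℤ) and A_2' ∈ M_{m_2,n_2}(ℤ), let α_1 ∈ ℤ^{n_1}, α_2 ∈ ℤ^{n_2}, and let γ ∈ ℤ with γ ≠ 0. Form the block matrices A_1 = [[A_1', 0],[α_1, γ]] ∈ M_{m_1+1, n_1+1}(ℤ), A_2 = [[A_2', 0],[α_2, γ]] ∈ M_{m_2+1, n_2+1}(ℤ), and A = [[A_1', 0, 0],[0, A_2', 0],[α_1, α_2, γ]] ∈ M_{m_1+m_2+1, n_1+n_2+1}(ℤ). If the toric ideals ker φ_{A_1} ⊆ k[z_1, x] and ker φ_{A_2} ⊆ k[z_2, x] are both homogeneous with respect to total degree, then the toric ideal ker φ_A ⊆ k[z_1, z_2, x] is homogeneous with respect to total degree. -/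

import Mathlib

open MvPolynomial

/-- The `k`-algebra homomorphism into the Laurent polynomial ring (group algebra `k[ℤ^ρ]`)
sending the variable indexed by `i` to the Laurent monomial whose exponent vector is the
`i`-th column of `B`. -/
noncomputable def phiB (k : Type) [Field k] {ρ σ : Type} (B : Matrix ρ σ ℤ) :
    MvPolynomial σ k →ₐ[k] AddMonoidAlgebra k (ρ → ℤ) :=
  MvPolynomial.aeval fun i => AddMonoidAlgebra.single (fun r => B r i) 1

/-!
A toric ideal `ker φ_B` is homogeneous exactly when every integer vector `w` with `B w = 0` has
coordinate sum `0`. Splitting `w` into positive and negative parts gives a binomial `z^u - z^v` in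
the ideal; conversely, once the degree of a monomial is a function of its image, `φ_B` carries
homogeneous components to restrictions of the support.

For the block matrices, a kernel vector `(w₁, w₂, c)` of `A` yields kernel vectors
`(γ w₁, -α₁ · w₁)` of `A₁` and `(γ w₂, -α₂ · w₂)` of `A₂`, so `γ Σ w₁ = α₁ · w₁` and
`γ Σ w₂ = α₂ · w₂`. With the last row of `A w = 0` this gives `γ (Σ w₁ + Σ w₂ + c) = 0`,
and `γ ≠ 0`.
-/

open Matrix

section

variable {k : Type} [Field k] {ρ σ : Type} [Fintype σ]

theorem phiB_monomial (B : Matrix ρ σ ℤ) (u : σ →₀ ℕ) (c : k) :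
    phiB k B (monomial u c) = AddMonoidAlgebra.single (B *ᵥ fun i => (u i : ℤ)) c := by
  rw [phiB, aeval_monomial, Finsupp.prod_fintype _ _ fun _ => pow_zero _]
  simp only [AddMonoidAlgebra.single_pow, one_pow, AddMonoidAlgebra.prod_single,
    Finset.prod_const_one, AddMonoidAlgebra.coe_algebraMap, Function.comp_apply,
    AddMonoidAlgebra.single_mul_single, zero_add, mul_one]
  congr 1
  ext r
  simp [mulVec, dotProduct, Finset.sum_apply, mul_comm]

def SumVanishesOnKernel (B : Matrix ρ σ ℤ) : Prop :=
  ∀ w : σ → ℤ, B *ᵥ w = 0 → ∑ i, w i = 0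

theorem degree_eq_of_homogeneousComponent_mem_ker (B : Matrix ρ σ ℤ)
    (h : ∀ f ∈ RingHom.ker (phiB k B), ∀ d : ℕ,
      homogeneousComponent d f ∈ RingHom.ker (phiB k B))
    {u v : σ →₀ ℕ} (huv : (B *ᵥ fun i => (u i : ℤ)) = B *ᵥ fun i => (v i : ℤ)) :
    u.degree = v.degree := by
  by_contra hne
  have hker : monomial u (1 : k) - monomial v 1 ∈ RingHom.ker (phiB k B) := by
    rw [RingHom.mem_ker, map_sub, phiB_monomial, phiB_monomial, huv, sub_self]
  have hcomp : homogeneousComponent u.degree (monomial u (1 : k) - monomial v 1)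
      = monomial u 1 := by
    rw [map_sub, homogeneousComponent_of_mem (isHomogeneous_monomial _ rfl),
      homogeneousComponent_of_mem (isHomogeneous_monomial _ rfl), if_pos rfl, if_neg hne,
      sub_zero]
  have := h _ hker u.degree
  rw [hcomp, RingHom.mem_ker, phiB_monomial, AddMonoidAlgebra.single_eq_zero] at this
  exact one_ne_zero this

theorem homogeneousComponent_mem_ker_of_degree_eq (B : Matrix ρ σ ℤ)
    (h : ∀ u v : σ →₀ ℕ, (B *ᵥ fun i => (u i : ℤ)) = (B *ᵥ fun i => (v i : ℤ)) →
      u.degree = v.degree) :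
    ∀ f ∈ RingHom.ker (phiB k B), ∀ d : ℕ,
      homogeneousComponent d f ∈ RingHom.ker (phiB k B) := by
  classical
  intro f hf d
  let P : (ρ → ℤ) → Prop := fun g =>
    ∃ u : σ →₀ ℕ, (B *ᵥ fun i => (u i : ℤ)) = g ∧ u.degree = d
  have hfilter : ∀ f : MvPolynomial σ k,
      (phiB k B (homogeneousComponent d f)).coeff = (phiB k B f).coeff.filter P := by
    intro f
    induction f using MvPolynomial.induction_on' with
    | monomial u c =>
      rw [homogeneousComponent_of_mem (isHomogeneous_monomial _ rfl)]
      split_ifs with hd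
      · rw [phiB_monomial, AddMonoidAlgebra.coeff_single,
          Finsupp.filter_single_of_pos _ ⟨u, rfl, hd.symm⟩]
      · rw [map_zero, phiB_monomial, AddMonoidAlgebra.coeff_zero, AddMonoidAlgebra.coeff_single,
          Finsupp.filter_single_of_neg]
        rintro ⟨v, hv, rfl⟩
        exact hd (h u v hv.symm).symm
    | add p q hp hq => rw [map_add, map_add, AddMonoidAlgebra.coeff_add, hp, hq, map_add,
        AddMonoidAlgebra.coeff_add, Finsupp.filter_add]
  rw [RingHom.mem_ker] at hf ⊢
  rw [← AddMonoidAlgebra.coeff_eq_zero, hfilter, hf, AddMonoidAlgebra.coeff_zero,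
    Finsupp.filter_zero]

theorem sumVanishesOnKernel_iff_degree_eq (B : Matrix ρ σ ℤ) :
    SumVanishesOnKernel B ↔ ∀ u v : σ →₀ ℕ,
      (B *ᵥ fun i => (u i : ℤ)) = (B *ᵥ fun i => (v i : ℤ)) → u.degree = v.degree := by
  constructor
  · intro h u v huv
    have := h ((fun i => (u i : ℤ)) - fun i => (v i : ℤ)) (by rw [mulVec_sub, huv, sub_self])
    simp only [Pi.sub_apply, Finset.sum_sub_distrib, sub_eq_zero] at this
    rw [Finsupp.degree_eq_sum, Finsupp.degree_eq_sum]
    exact_mod_cast this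
  · intro h w hw
    let u : σ →₀ ℕ := Finsupp.equivFunOnFinite.symm fun i => (w i).toNat
    let v : σ →₀ ℕ := Finsupp.equivFunOnFinite.symm fun i => (-w i).toNat
    have hw_eq : ((fun i => (u i : ℤ)) - fun i => (v i : ℤ)) = w :=
      funext fun i => Int.toNat_sub_toNat_neg (w i)
    have hdeg := h u v (sub_eq_zero.mp (by rw [← mulVec_sub, hw_eq, hw]))
    rw [Finsupp.degree_eq_sum, Finsupp.degree_eq_sum] at hdeg
    simp only [← hw_eq, Pi.sub_apply, Finset.sum_sub_distrib, sub_eq_zero]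
    exact_mod_cast hdeg

theorem homogeneousComponent_mem_ker_phiB_iff (B : Matrix ρ σ ℤ) :
    (∀ f ∈ RingHom.ker (phiB k B), ∀ d : ℕ,
      homogeneousComponent d f ∈ RingHom.ker (phiB k B)) ↔ SumVanishesOnKernel B := by
  rw [sumVanishesOnKernel_iff_degree_eq]
  exact ⟨fun h _ _ => degree_eq_of_homogeneousComponent_mem_ker B h,
    homogeneousComponent_mem_ker_of_degree_eq B⟩

theorem SumVanishesOnKernel.mul_sum_eq_dotProduct {A' : Matrix ρ σ ℤ} {α : σ → ℤ} {γ : ℤ}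
    (h : SumVanishesOnKernel
      (fromBlocks A' 0 (of fun (_ : Unit) j => α j) (of fun (_ : Unit) (_ : Unit) => γ)))
    {w : σ → ℤ} (hw : A' *ᵥ w = 0) :
    γ * ∑ i, w i = α ⬝ᵥ w := by
  have := h (Sum.elim (γ • w) fun _ => -(α ⬝ᵥ w)) <| by
    rw [fromBlocks_mulVec]
    ext (r | r)
    · simp only [Sum.elim_inl, Sum.elim_comp_inl, zero_mulVec, add_zero, mulVec_smul, hw,
        smul_zero, Pi.zero_apply]
    · simp [mulVec, dotProduct, Finset.mul_sum, mul_left_comm]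
  simpa [Fintype.sum_sum_type, Finset.mul_sum, add_neg_eq_zero] using this

theorem SumVanishesOnKernel.fromBlocks {ρ₁ ρ₂ σ₁ σ₂ : Type} [Fintype σ₁] [Fintype σ₂]
    {A₁' : Matrix ρ₁ σ₁ ℤ} {A₂' : Matrix ρ₂ σ₂ ℤ} {α₁ : σ₁ → ℤ} {α₂ : σ₂ → ℤ} {γ : ℤ}
    (hγ : γ ≠ 0)
    (h₁ : SumVanishesOnKernel
      (Matrix.fromBlocks A₁' 0
        (of fun (_ : Unit) j => α₁ j) (of fun (_ : Unit) (_ : Unit) => γ)))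
    (h₂ : SumVanishesOnKernel
      (Matrix.fromBlocks A₂' 0
        (of fun (_ : Unit) j => α₂ j) (of fun (_ : Unit) (_ : Unit) => γ))) :
    SumVanishesOnKernel (Matrix.fromBlocks (Matrix.fromBlocks A₁' 0 0 A₂') 0
      (of fun (_ : Unit) c => Sum.elim α₁ α₂ c) (of fun (_ : Unit) (_ : Unit) => γ)) := by
  intro w hw
  set w₁ : σ₁ → ℤ := w ∘ Sum.inl ∘ Sum.inl
  set w₂ : σ₂ → ℤ := w ∘ Sum.inl ∘ Sum.inr
  set c : ℤ := w (.inr ())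
  rw [fromBlocks_mulVec, fromBlocks_mulVec] at hw
  have hw₁ : A₁' *ᵥ w₁ = 0 := funext fun r => by
    have := congrFun hw (.inl (.inl r))
    simp only [Sum.elim_inl, zero_mulVec, add_zero] at this
    exact this
  have hw₂ : A₂' *ᵥ w₂ = 0 := funext fun r => by
    have := congrFun hw (.inl (.inr r))
    simp only [Sum.elim_inl, Sum.elim_inr, zero_mulVec, zero_add, add_zero] at this
    exact this
  have hlast : α₁ ⬝ᵥ w₁ + α₂ ⬝ᵥ w₂ + γ * c = 0 := by
    simpa [mulVec, dotProduct, Fintype.sum_sum_type, w₁, w₂, c]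
      using congrFun hw (.inr ())
  refine (mul_eq_zero.mp ?_).resolve_left hγ
  calc γ * ∑ i, w i = γ * ∑ j, w₁ j + γ * ∑ j, w₂ j + γ * c := by
        simp [Fintype.sum_sum_type, w₁, w₂, c, mul_add]
    _ = α₁ ⬝ᵥ w₁ + α₂ ⬝ᵥ w₂ + γ * c := by
        rw [h₁.mul_sum_eq_dotProduct hw₁, h₂.mul_sum_eq_dotProduct hw₂]
    _ = 0 := hlast

end

/-- If the toric ideals of the block matrices `A₁ = [[A₁', 0],[α₁, γ]]` (in variables
`z₁, x`) and `A₂ = [[A₂', 0],[α₂, γ]]` (in variables `z₂, x`) are homogeneous for the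
total-degree grading, then so is the toric ideal of the combined block matrix
`A = [[A₁', 0, 0],[0, A₂', 0],[α₁, α₂, γ]]` (in variables `z₁, z₂, x`).
Here the extra variable `x` corresponds to the last column and the extra Laurent variable
`s` to the last row of each matrix. -/
theorem stmt_13 (k : Type) [Field k] (m₁ m₂ n₁ n₂ : ℕ)
    (A₁' : Matrix (Fin m₁) (Fin n₁) ℤ) (A₂' : Matrix (Fin m₂) (Fin n₂) ℤ)
    (α₁ : Fin n₁ → ℤ) (α₂ : Fin n₂ → ℤ) (γ : ℤ) (hγ : γ ≠ 0)
    (A₁ : Matrix (Fin m₁ ⊕ Unit) (Fin n₁ ⊕ Unit) ℤ)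
    (hA₁ : A₁ = Matrix.fromBlocks A₁' 0
      (Matrix.of fun _ j => α₁ j) (Matrix.of fun _ _ => γ))
    (A₂ : Matrix (Fin m₂ ⊕ Unit) (Fin n₂ ⊕ Unit) ℤ)
    (hA₂ : A₂ = Matrix.fromBlocks A₂' 0
      (Matrix.of fun _ j => α₂ j) (Matrix.of fun _ _ => γ))
    (A : Matrix ((Fin m₁ ⊕ Fin m₂) ⊕ Unit) ((Fin n₁ ⊕ Fin n₂) ⊕ Unit) ℤ)
    (hA : A = Matrix.fromBlocks (Matrix.fromBlocks A₁' 0 0 A₂') 0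
      (Matrix.of fun _ c => Sum.elim α₁ α₂ c) (Matrix.of fun _ _ => γ))
    (hhom₁ : ∀ f ∈ RingHom.ker (phiB k A₁), ∀ d : ℕ,
      MvPolynomial.homogeneousComponent d f ∈ RingHom.ker (phiB k A₁))
    (hhom₂ : ∀ f ∈ RingHom.ker (phiB k A₂), ∀ d : ℕ,
      MvPolynomial.homogeneousComponent d f ∈ RingHom.ker (phiB k A₂)) :
    ∀ f ∈ RingHom.ker (phiB k A), ∀ d : ℕ,
      MvPolynomial.homogeneousComponent d f ∈ RingHom.ker (phiB k A) := by
  subst hA₁ hA₂ hA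
  rw [homogeneousComponent_mem_ker_phiB_iff] at hhom₁ hhom₂ ⊢
  exact hhom₁.fromBlocks hγ hhom₂
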